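/- arXiv:2210.13138 — 7 statements merged into one kernel-verified Lean document; each statement's English description precedes it below -/
import Mathlib

section
/- Let 0 < α ≤ 1, y₀ ∈ ℝ, K > 0, T > 0, and let G = {(t,y) : t ∈ [0,T], |y−y₀| ≤ K}. Let f : G → ℝ be continuous and satisfy |f(t,y₁) − f(t,y₂)| ≤ L|y₁ − y₂| for some L > 0 and all (t,y₁),(t,y₂) ∈ G. Set M = sup_{(t,z)∈G} |f(t,z)| and let T* = T if M = 0 and T* = min{T, (KΓ(α+1)/M)^{1/α}} otherwise. Then there exists a unique continuous function y : [0,T*] → ℝ satisfying the Volterra integral equation y(t) = y₀ + (1/Γ(α)) ∫_0^t (t−s)^{α−1} f(s, y(s)) ds for all t ∈ [0,T*] (the integral formulation of the Caputo initial-value problem ᶜ_0 D^α y(t) = f(t,y(t)), y(0) = y₀). -/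
/-!
Clamping the second argument to `[y₀ - K, y₀ + K]` extends `f` from `G` to a field `F` on
`[0, T] × ℝ` with the same bound `M` and Lipschitz constant `L`, equal to `f` on `G`. Hence the
solutions with values in the `K`-ball are exactly the fixed points of the Picard operator
`P u = y₀ + I^α (F (·, u))`, where `I^α` is the Riemann–Liouville integral, and every `P u` lies in
that ball on `[0, T*]` because `|I^α g| ≤ M t^α / Γ(α + 1) ≤ K` there when `|g| ≤ M`. For `α ≤ 1`
the integral `I^α g` of a bounded `g` is `α`-Hölder, so `P` preserves continuity. Comparing with
the Gamma integral gives `I^α e^{r·} ≤ r^{-α} e^{rt}`, so for `r = (2L)^{1/α}` the operator `P`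
halves the Bielecki distance `sup e^{-rt} |u t - v t|`, and Banach's fixed point theorem applies.
-/

open MeasureTheory Set Filter Topology Function
open scoped NNReal

section Kernel

variable {α : ℝ} {g : ℝ → ℝ} {C : ℝ}

lemma intervalIntegrable_sub_rpow (hα : 0 < α) (t a b : ℝ) :
    IntervalIntegrable (fun s => (t - s) ^ (α - 1)) volume a b := by
  simpa using (intervalIntegral.intervalIntegrable_rpow' (r := α - 1) (by linarith)
    (a := t - a) (b := t - b)).comp_sub_left t

lemma integral_sub_rpow (hα : 0 < α) (t a b : ℝ) :
    ∫ s in a..b, (t - s) ^ (α - 1) = ((t - a) ^ α - (t - b) ^ α) / α := by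
  rw [intervalIntegral.integral_comp_sub_left (fun x : ℝ => x ^ (α - 1)) t,
    integral_rpow (Or.inl (by linarith))]
  ring_nf

lemma intervalIntegrable_sub_rpow_mul (hα : 0 < α) {t a b : ℝ}
    (hg : ContinuousOn g (uIcc a b)) :
    IntervalIntegrable (fun s => (t - s) ^ (α - 1) * g s) volume a b :=
  (intervalIntegrable_sub_rpow hα t a b).mul_continuousOn hg

lemma norm_integral_sub_rpow_mul_le (hα : 0 < α) {a b : ℝ} (hab : a ≤ b)
    (hgC : ∀ s ∈ Ioc a b, |g s| ≤ C) :
    ‖∫ s in a..b, (b - s) ^ (α - 1) * g s‖ ≤ C * (b - a) ^ α / α := by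
  refine (intervalIntegral.norm_integral_le_of_norm_le hab (g := fun s => (b - s) ^ (α - 1) * C)
    (ae_of_all _ fun s hs => ?_) ((intervalIntegrable_sub_rpow hα _ _ _).mul_const C)).trans_eq ?_
  · have hk : 0 ≤ (b - s) ^ (α - 1) := Real.rpow_nonneg (by linarith [hs.2]) _
    rw [Real.norm_eq_abs, abs_mul, abs_of_nonneg hk]
    exact mul_le_mul_of_nonneg_left (hgC s hs) hk
  · rw [intervalIntegral.integral_mul_const, integral_sub_rpow hα, sub_self,
      Real.zero_rpow hα.ne', sub_zero]
    ring

lemma norm_integral_rpow_sub_rpow_mul_le (hα : 0 < α) (hα1 : α ≤ 1) (hC : 0 ≤ C) {t₁ t₂ : ℝ}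
    (h0 : 0 ≤ t₁) (h12 : t₁ ≤ t₂) (hgC : ∀ s ∈ Ioc 0 t₁, |g s| ≤ C) :
    ‖∫ s in (0 : ℝ)..t₁, ((t₂ - s) ^ (α - 1) - (t₁ - s) ^ (α - 1)) * g s‖ ≤
      C * (t₂ - t₁) ^ α / α := by
  have hk := intervalIntegrable_sub_rpow hα (a := 0) (b := t₁)
  refine (intervalIntegral.norm_integral_le_of_norm_le h0
    (g := fun s => C * ((t₁ - s) ^ (α - 1) - (t₂ - s) ^ (α - 1))) ?_
    (((hk t₁).sub (hk t₂)).const_mul C)).trans ?_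
  · filter_upwards [volume.ae_ne t₁] with s hst₁ hs
    have hmono : (t₂ - s) ^ (α - 1) ≤ (t₁ - s) ^ (α - 1) :=
      Real.rpow_le_rpow_of_nonpos (by linarith [lt_of_le_of_ne hs.2 hst₁]) (by linarith)
        (by linarith)
    rw [Real.norm_eq_abs, abs_mul, abs_of_nonpos (by linarith), neg_sub, mul_comm]
    exact mul_le_mul_of_nonneg_right (hgC s hs) (by linarith)
  · rw [intervalIntegral.integral_const_mul, intervalIntegral.integral_sub (hk t₁) (hk t₂),
      integral_sub_rpow hα, integral_sub_rpow hα, sub_self, Real.zero_rpow hα.ne', ← sub_div,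
      mul_div_assoc]
    have hpow : t₁ ^ α ≤ t₂ ^ α := Real.rpow_le_rpow h0 h12 hα.le
    refine mul_le_mul_of_nonneg_left (div_le_div_of_nonneg_right ?_ hα.le) hC
    simp only [sub_zero]
    linarith

end Kernel

noncomputable def riemannLiouvilleIntegral (α : ℝ) (g : ℝ → ℝ) (t : ℝ) : ℝ :=
  1 / Real.Gamma α * ∫ s in (0 : ℝ)..t, (t - s) ^ (α - 1) * g s

section RiemannLiouville

variable {α t : ℝ} {g h : ℝ → ℝ}

lemma riemannLiouvilleIntegral_const_mul (c : ℝ) :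
    riemannLiouvilleIntegral α (fun s => c * g s) t = c * riemannLiouvilleIntegral α g t := by
  simp only [riemannLiouvilleIntegral, mul_left_comm _ c, intervalIntegral.integral_const_mul]

lemma riemannLiouvilleIntegral_congr (ht : 0 ≤ t) (hgh : EqOn g h (Icc 0 t)) :
    riemannLiouvilleIntegral α g t = riemannLiouvilleIntegral α h t := by
  rw [riemannLiouvilleIntegral, riemannLiouvilleIntegral, intervalIntegral.integral_congr
    fun s hs => congrArg _ (hgh (uIcc_of_le ht ▸ hs))]

lemma riemannLiouvilleIntegral_sub (hα : 0 < α) {g₁ g₂ : ℝ → ℝ} (hg₁ : ContinuousOn g₁ (uIcc 0 t))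
    (hg₂ : ContinuousOn g₂ (uIcc 0 t)) :
    riemannLiouvilleIntegral α (fun s => g₁ s - g₂ s) t =
      riemannLiouvilleIntegral α g₁ t - riemannLiouvilleIntegral α g₂ t := by
  simp only [riemannLiouvilleIntegral, ← mul_sub, ← intervalIntegral.integral_sub
    (intervalIntegrable_sub_rpow_mul hα hg₁) (intervalIntegrable_sub_rpow_mul hα hg₂)]

lemma abs_riemannLiouvilleIntegral_le (hα : 0 < α) (ht : 0 ≤ t) (hgh : ∀ s ∈ Ioc 0 t, |g s| ≤ h s)
    (hh : IntervalIntegrable (fun s => (t - s) ^ (α - 1) * h s) volume 0 t) :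
    |riemannLiouvilleIntegral α g t| ≤ riemannLiouvilleIntegral α h t := by
  have hΓ : 0 < 1 / Real.Gamma α := one_div_pos.2 (Real.Gamma_pos_of_pos hα)
  simp only [riemannLiouvilleIntegral]
  rw [abs_mul, abs_of_pos hΓ]
  refine mul_le_mul_of_nonneg_left ?_ hΓ.le
  rw [← Real.norm_eq_abs]
  refine intervalIntegral.norm_integral_le_of_norm_le ht (ae_of_all _ fun s hs => ?_) hh
  have hk : 0 ≤ (t - s) ^ (α - 1) := Real.rpow_nonneg (by linarith [hs.2]) _
  rw [Real.norm_eq_abs, abs_mul, abs_of_nonneg hk]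
  exact mul_le_mul_of_nonneg_left (hgh s hs) hk

lemma riemannLiouvilleIntegral_const (hα : 0 < α) (c : ℝ) :
    riemannLiouvilleIntegral α (fun _ => c) t = c * t ^ α / Real.Gamma (α + 1) := by
  rw [riemannLiouvilleIntegral, intervalIntegral.integral_mul_const, integral_sub_rpow hα,
    sub_self, Real.zero_rpow hα.ne', sub_zero, sub_zero, Real.Gamma_add_one hα.ne']
  field_simp

lemma riemannLiouvilleIntegral_exp_le (hα : 0 < α) (ht : 0 ≤ t) {r : ℝ} (hr : 0 < r) :
    riemannLiouvilleIntegral α (fun s => Real.exp (r * s)) t ≤ r⁻¹ ^ α * Real.exp (r * t) := by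
  set k : ℝ → ℝ := fun u => u ^ (α - 1) * Real.exp (-(r * u))
  have hΓk : ∫ u in Ioi 0, k u = r⁻¹ ^ α * Real.Gamma α := by
    simpa only [one_div] using Real.integral_rpow_mul_exp_neg_mul_Ioi hα hr
  have hk_int : IntegrableOn k (Ioi 0) :=
    Integrable.of_integral_ne_zero (by rw [hΓk]; positivity)
  have hk_nonneg : ∀ u ∈ Ioi (0 : ℝ), 0 ≤ k u :=
    fun u hu => mul_nonneg (Real.rpow_nonneg hu.le _) (Real.exp_pos _).le
  have hsubst : ∫ s in (0 : ℝ)..t, (t - s) ^ (α - 1) * Real.exp (r * s) =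
      Real.exp (r * t) * ∫ u in Ioc 0 t, k u := by
    rw [← intervalIntegral.integral_of_le ht, ← intervalIntegral.integral_const_mul]
    have := intervalIntegral.integral_comp_sub_left (fun u => Real.exp (r * t) * k u) t
      (a := 0) (b := t)
    simp only [sub_self, sub_zero] at this
    rw [← this]
    congr 1 with s
    rw [mul_left_comm, ← Real.exp_add]
    ring_nf
  have hmono : ∫ u in Ioc 0 t, k u ≤ ∫ u in Ioi 0, k u :=
    setIntegral_mono_set hk_int ((ae_restrict_iff' measurableSet_Ioi).2 (ae_of_all _ hk_nonneg))
      Ioc_subset_Ioi_self.eventuallyLE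
  rw [riemannLiouvilleIntegral, hsubst]
  calc 1 / Real.Gamma α * (Real.exp (r * t) * ∫ u in Ioc 0 t, k u)
      ≤ 1 / Real.Gamma α * (Real.exp (r * t) * (r⁻¹ ^ α * Real.Gamma α)) := by
        gcongr; exact hΓk ▸ hmono
    _ = r⁻¹ ^ α * Real.exp (r * t) := by field_simp

lemma abs_riemannLiouvilleIntegral_sub_le (hα : 0 < α) (hα1 : α ≤ 1) {C t₁ t₂ : ℝ}
    (hg : ContinuousOn g (Icc 0 t₂)) (hgC : ∀ s ∈ Icc 0 t₂, |g s| ≤ C)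
    (h0 : 0 ≤ t₁) (h12 : t₁ ≤ t₂) :
    |riemannLiouvilleIntegral α g t₂ - riemannLiouvilleIntegral α g t₁| ≤
      2 * C * (t₂ - t₁) ^ α / Real.Gamma (α + 1) := by
  have hC : 0 ≤ C := (abs_nonneg _).trans (hgC t₂ ⟨h0.trans h12, le_rfl⟩)
  have hΓ : 0 < Real.Gamma α := Real.Gamma_pos_of_pos hα
  have hg₁ : ContinuousOn g (uIcc 0 t₁) :=
    hg.mono (by rw [uIcc_of_le h0]; exact Icc_subset_Icc le_rfl h12)
  have hg₁₂ : ContinuousOn g (uIcc t₁ t₂) :=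
    hg.mono (by rw [uIcc_of_le h12]; exact Icc_subset_Icc h0 le_rfl)
  have hsplit : (∫ s in (0 : ℝ)..t₂, (t₂ - s) ^ (α - 1) * g s) -
      ∫ s in (0 : ℝ)..t₁, (t₁ - s) ^ (α - 1) * g s =
      (∫ s in (0 : ℝ)..t₁, ((t₂ - s) ^ (α - 1) - (t₁ - s) ^ (α - 1)) * g s) +
        ∫ s in t₁..t₂, (t₂ - s) ^ (α - 1) * g s := by
    simp only [sub_mul]
    rw [← intervalIntegral.integral_add_adjacent_intervals
      (intervalIntegrable_sub_rpow_mul hα (t := t₂) hg₁) (intervalIntegrable_sub_rpow_mul hα hg₁₂),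
      intervalIntegral.integral_sub (intervalIntegrable_sub_rpow_mul hα hg₁)
        (intervalIntegrable_sub_rpow_mul hα hg₁)]
    ring
  have hbound := norm_add_le_of_le
    (norm_integral_rpow_sub_rpow_mul_le hα hα1 hC h0 h12 fun s hs =>
      hgC s ⟨hs.1.le, hs.2.trans h12⟩)
    (norm_integral_sub_rpow_mul_le hα h12 fun s hs => hgC s ⟨h0.trans hs.1.le, hs.2⟩)
  rw [← hsplit, Real.norm_eq_abs] at hbound
  rw [riemannLiouvilleIntegral, riemannLiouvilleIntegral, ← mul_sub, abs_mul,
    abs_of_pos (one_div_pos.2 hΓ), Real.Gamma_add_one hα.ne']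
  calc _ ≤ 1 / Real.Gamma α * (C * (t₂ - t₁) ^ α / α + C * (t₂ - t₁) ^ α / α) :=
        mul_le_mul_of_nonneg_left hbound (one_div_pos.2 hΓ).le
    _ = _ := by field_simp; ring

lemma continuousOn_riemannLiouvilleIntegral (hα : 0 < α) (hα1 : α ≤ 1) {b : ℝ}
    (hg : ContinuousOn g (Icc 0 b)) :
    ContinuousOn (riemannLiouvilleIntegral α g) (Icc 0 b) := by
  obtain ⟨C, hC⟩ := isCompact_Icc.exists_bound_of_continuousOn hg
  set D := 2 * C / Real.Gamma (α + 1)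
  have hHolder_of_le : ∀ x ∈ Icc 0 b, ∀ y ∈ Icc 0 b, x ≤ y →
      dist (riemannLiouvilleIntegral α g y) (riemannLiouvilleIntegral α g x) ≤ D * |y - x| ^ α := by
    intro x hx y hy hxy
    rw [Real.dist_eq, abs_of_nonneg (sub_nonneg.2 hxy)]
    exact (abs_riemannLiouvilleIntegral_sub_le hα hα1 (hg.mono (Icc_subset_Icc le_rfl hy.2))
      (fun s hs => hC s ⟨hs.1, hs.2.trans hy.2⟩) hx.1 hxy).trans_eq (by simp only [D]; ring)
  have hHolder : ∀ x ∈ Icc 0 b, ∀ y ∈ Icc 0 b,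
      dist (riemannLiouvilleIntegral α g y) (riemannLiouvilleIntegral α g x) ≤ D * |y - x| ^ α := by
    intro x hx y hy
    rcases le_total x y with hxy | hyx
    · exact hHolder_of_le x hx y hy hxy
    · rw [dist_comm, abs_sub_comm]
      exact hHolder_of_le y hy x hx hyx
  intro x hx
  have hlim : Tendsto (fun y => D * |y - x| ^ α) (𝓝[Icc 0 b] x) (𝓝 0) := by
    have hcont : Continuous fun y : ℝ => D * |y - x| ^ α :=
      ((continuous_id.sub continuous_const).abs.rpow_const fun _ => Or.inr hα.le).const_mul D
    simpa [Real.zero_rpow hα.ne'] using (hcont.tendsto x).mono_left nhdsWithin_le_nhds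
  exact tendsto_iff_dist_tendsto_zero.2 (squeeze_zero' (Eventually.of_forall fun _ => dist_nonneg)
    (eventually_nhdsWithin_of_forall fun y hy => hHolder x hx y hy) hlim)

end RiemannLiouville

section WeightedContraction

variable {X : Type*} [TopologicalSpace X] {s : Set X} {w : X → ℝ} {P : (X → ℝ) → X → ℝ}

lemma eqOn_of_weighted_contraction {q : ℝ}
    (hP_contr : ∀ u v, ContinuousOn u s → ContinuousOn v s → ∀ c : ℝ, 0 ≤ c →
      (∀ x ∈ s, |u x - v x| ≤ c * w x) → ∀ x ∈ s, |P u x - P v x| ≤ q * c * w x)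
    {u v : X → ℝ} (hu : ContinuousOn u s) (hv : ContinuousOn v s) (huv : EqOn u v s) :
    EqOn (P u) (P v) s := fun x hx => by
  have h := hP_contr u v hu hv 0 le_rfl (fun x hx => by simp [huv hx]) x hx
  rw [mul_zero, zero_mul] at h
  exact sub_eq_zero.1 (abs_nonpos_iff.1 h)

theorem exists_unique_fixedPoint_of_weighted_contraction [CompactSpace s]
    (hw : ContinuousOn w s) (hw_pos : ∀ x ∈ s, 0 < w x) {q : ℝ≥0} (hq : q < 1)
    (hP_cont : ∀ u, ContinuousOn u s → ContinuousOn (P u) s)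
    (hP_contr : ∀ u v, ContinuousOn u s → ContinuousOn v s → ∀ c : ℝ, 0 ≤ c →
      (∀ x ∈ s, |u x - v x| ≤ c * w x) → ∀ x ∈ s, |P u x - P v x| ≤ q * c * w x) :
    ∃ y, ContinuousOn y s ∧ (∀ x ∈ s, P y x = y x) ∧
      ∀ z, ContinuousOn z s → (∀ x ∈ s, P z x = z x) → ∀ x ∈ s, z x = y x := by
  -- `v ↦ P (w * v) / w` is a `q`-contraction of `C(s, ℝ)`, because the weighted distance of
  -- `w * v` and `w * v'` is the sup-distance of `v` and `v'`
  let lift : C(s, ℝ) → X → ℝ := fun v x => w x * extend Subtype.val v 0 x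
  have lift_apply : ∀ v x (hx : x ∈ s), lift v x = w x * v ⟨x, hx⟩ := fun v x hx =>
    congrArg (w x * ·) (Subtype.val_injective.extend_apply v 0 ⟨x, hx⟩)
  have lift_cont : ∀ v, ContinuousOn (lift v) s := fun v => by
    rw [continuousOn_iff_continuous_domRestrict]
    exact (hw.domRestrict.mul v.continuous).congr fun x => (lift_apply v x x.2).symm
  let Q : C(s, ℝ) → C(s, ℝ) := fun v =>
    ⟨fun x => P (lift v) x / w x,
      ((hP_cont _ (lift_cont v)).div hw fun x hx => (hw_pos x hx).ne').domRestrict⟩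
  have hQ : ContractingWith q Q := by
    refine ⟨hq, LipschitzWith.of_dist_le_mul fun v v' => ?_⟩
    refine (ContinuousMap.dist_le (by positivity)).2 fun x => ?_
    have hx := hw_pos x x.2
    have hvv' : ∀ x ∈ s, |lift v x - lift v' x| ≤ dist v v' * w x := fun x hx => by
      rw [lift_apply v x hx, lift_apply v' x hx, ← mul_sub, abs_mul, abs_of_pos (hw_pos x hx),
        mul_comm, ← Real.dist_eq]
      exact mul_le_mul_of_nonneg_right (ContinuousMap.dist_apply_le_dist _) (hw_pos x hx).le
    have h := hP_contr _ _ (lift_cont v) (lift_cont v') _ dist_nonneg hvv' x x.2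
    change |P (lift v) x / w x - P (lift v') x / w x| ≤ q * dist v v'
    rw [← sub_div, abs_div, abs_of_pos hx, div_le_iff₀ hx]
    exact h
  have hQ_fixed : ∀ v, IsFixedPt Q v ↔ ∀ x ∈ s, P (lift v) x = lift v x := by
    intro v
    rw [IsFixedPt, ContinuousMap.ext_iff, Subtype.forall]
    refine forall₂_congr fun x hx => ?_
    change P (lift v) x / w x = v ⟨x, hx⟩ ↔ _
    rw [lift_apply v x hx, div_eq_iff (hw_pos x hx).ne', mul_comm]
  refine ⟨lift (hQ.fixedPoint Q), lift_cont _, (hQ_fixed _).1 (hQ.fixedPoint_isFixedPt),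
    fun z hz hPz x hx => ?_⟩
  let v : C(s, ℝ) := ⟨s.domRestrict fun x => z x / w x,
    (hz.div hw fun x hx => (hw_pos x hx).ne').domRestrict⟩
  have hlift_v : EqOn (lift v) z s := fun x hx => by
    rw [lift_apply v x hx]
    exact mul_div_cancel₀ _ (hw_pos x hx).ne'
  have hv : IsFixedPt Q v := (hQ_fixed v).2 fun x hx => by
    rw [eqOn_of_weighted_contraction hP_contr (lift_cont v) hz hlift_v hx, hPz x hx, hlift_v hx]
  rw [← hlift_v hx, hQ.fixedPoint_unique hv]

end WeightedContraction

lemma ContinuousOn.comp_graph {F : ℝ → ℝ → ℝ} {u : ℝ → ℝ} {I : Set ℝ}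
    (hF : ContinuousOn (uncurry F) (I ×ˢ univ)) (hu : ContinuousOn u I) :
    ContinuousOn (fun s => F s (u s)) I :=
  hF.comp (continuousOn_id.prodMk hu) fun _ hs => ⟨hs, mem_univ _⟩

noncomputable def volterraPicard (α y₀ : ℝ) (F : ℝ → ℝ → ℝ) (u : ℝ → ℝ) (t : ℝ) : ℝ :=
  y₀ + riemannLiouvilleIntegral α (fun s => F s (u s)) t

section VolterraPicard

variable {α y₀ b : ℝ} {F : ℝ → ℝ → ℝ} {u v : ℝ → ℝ}

lemma continuousOn_volterraPicard (hα : 0 < α) (hα1 : α ≤ 1)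
    (hF : ContinuousOn (uncurry F) (Icc 0 b ×ˢ univ)) (hu : ContinuousOn u (Icc 0 b)) :
    ContinuousOn (volterraPicard α y₀ F u) (Icc 0 b) :=
  continuousOn_const.add (continuousOn_riemannLiouvilleIntegral hα hα1 (hF.comp_graph hu))

lemma abs_volterraPicard_sub_le (hα : 0 < α) {M t : ℝ} (hFM : ∀ s ∈ Icc 0 b, ∀ v, |F s v| ≤ M)
    (ht : t ∈ Icc 0 b) :
    |volterraPicard α y₀ F u t - y₀| ≤ M * t ^ α / Real.Gamma (α + 1) := by
  rw [volterraPicard, add_sub_cancel_left, ← riemannLiouvilleIntegral_const hα]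
  exact abs_riemannLiouvilleIntegral_le hα ht.1 (fun s hs => hFM s ⟨hs.1.le, hs.2.trans ht.2⟩ _)
    ((intervalIntegrable_sub_rpow hα t 0 t).mul_const M)

lemma abs_volterraPicard_sub_volterraPicard_le (hα : 0 < α) {L c r t : ℝ} (hL : 0 ≤ L)
    (hc : 0 ≤ c) (hr : 0 < r) (hF : ContinuousOn (uncurry F) (Icc 0 b ×ˢ univ))
    (hFL : ∀ s ∈ Icc 0 b, ∀ v₁ v₂, |F s v₁ - F s v₂| ≤ L * |v₁ - v₂|)
    (hu : ContinuousOn u (Icc 0 b)) (hv : ContinuousOn v (Icc 0 b))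
    (huv : ∀ s ∈ Icc 0 b, |u s - v s| ≤ c * Real.exp (r * s)) (ht : t ∈ Icc 0 b) :
    |volterraPicard α y₀ F u t - volterraPicard α y₀ F v t| ≤
      L * r⁻¹ ^ α * c * Real.exp (r * t) := by
  have hsub : uIcc 0 t ⊆ Icc 0 b := by rw [uIcc_of_le ht.1]; exact Icc_subset_Icc le_rfl ht.2
  rw [volterraPicard, volterraPicard, add_sub_add_left_eq_sub,
    ← riemannLiouvilleIntegral_sub hα ((hF.comp_graph hu).mono hsub) ((hF.comp_graph hv).mono hsub)]
  calc _ ≤ riemannLiouvilleIntegral α (fun s => L * c * Real.exp (r * s)) t := by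
        refine abs_riemannLiouvilleIntegral_le hα ht.1 (fun s hs => ?_)
          (intervalIntegrable_sub_rpow_mul hα (by fun_prop))
        have hs' : s ∈ Icc 0 b := ⟨hs.1.le, hs.2.trans ht.2⟩
        calc |F s (u s) - F s (v s)| ≤ L * |u s - v s| := hFL s hs' _ _
          _ ≤ L * (c * Real.exp (r * s)) := mul_le_mul_of_nonneg_left (huv s hs') hL
          _ = L * c * Real.exp (r * s) := by ring
    _ ≤ L * c * (r⁻¹ ^ α * Real.exp (r * t)) := by
        rw [riemannLiouvilleIntegral_const_mul]
        exact mul_le_mul_of_nonneg_left (riemannLiouvilleIntegral_exp_le hα ht.1 hr)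
          (mul_nonneg hL hc)
    _ = L * r⁻¹ ^ α * c * Real.exp (r * t) := by ring

end VolterraPicard

lemma exists_extension_of_strip {f : ℝ → ℝ → ℝ} {y₀ K T L M : ℝ} {G : Set (ℝ × ℝ)} (hK : 0 ≤ K)
    (hL : 0 ≤ L) (hG : G = {p : ℝ × ℝ | p.1 ∈ Icc 0 T ∧ |p.2 - y₀| ≤ K})
    (hf : ContinuousOn (uncurry f) G) (hfM : ∀ p ∈ G, |f p.1 p.2| ≤ M)
    (hlip : ∀ t y₁ y₂, (t, y₁) ∈ G → (t, y₂) ∈ G → |f t y₁ - f t y₂| ≤ L * |y₁ - y₂|) :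
    ∃ F : ℝ → ℝ → ℝ, ContinuousOn (uncurry F) (Icc 0 T ×ˢ univ) ∧
      (∀ s ∈ Icc 0 T, ∀ v, |F s v| ≤ M) ∧
      (∀ s ∈ Icc 0 T, ∀ v₁ v₂, |F s v₁ - F s v₂| ≤ L * |v₁ - v₂|) ∧
      ∀ s v, |v - y₀| ≤ K → F s v = f s v := by
  have hKK : y₀ - K ≤ y₀ + K := by linarith
  set clamp : ℝ → ℝ := fun v => (projIcc (y₀ - K) (y₀ + K) hKK v : ℝ)
  have hclampG : ∀ s ∈ Icc 0 T, ∀ v, (s, clamp v) ∈ G := fun s hs v => by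
    rw [hG]
    exact ⟨hs, abs_sub_comm y₀ _ ▸ mem_Icc_iff_abs_le.2 (projIcc (y₀ - K) (y₀ + K) hKK v).2⟩
  refine ⟨fun s v => f s (clamp v), ?_, fun s hs v => hfM _ (hclampG s hs v),
    fun s hs v₁ v₂ => ?_, fun s v hv => ?_⟩
  · exact hf.comp (continuous_fst.prodMk (continuous_subtype_val.comp
      (continuous_projIcc.comp continuous_snd))).continuousOn fun q hq => hclampG q.1 hq.1 q.2
  · exact (hlip s _ _ (hclampG s hs v₁) (hclampG s hs v₂)).trans
      (mul_le_mul_of_nonneg_left (abs_projIcc_sub_projIcc hKK) hL)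
  · simp only [clamp, projIcc_of_mem hKK (mem_Icc_iff_abs_le.1 (abs_sub_comm v y₀ ▸ hv))]

lemma mul_rpow_div_Gamma_le {α M K T t : ℝ} (hα : 0 < α) (hM : 0 ≤ M) (hK : 0 ≤ K) (ht : 0 ≤ t)
    (htT : t ≤ if M = 0 then T else min T ((K * Real.Gamma (α + 1) / M) ^ (1 / α))) :
    M * t ^ α / Real.Gamma (α + 1) ≤ K := by
  have hΓ : 0 < Real.Gamma (α + 1) := Real.Gamma_pos_of_pos (by linarith)
  rw [div_le_iff₀ hΓ]
  split_ifs at htT with hM0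
  · rw [hM0, zero_mul]
    positivity
  · have hMpos : 0 < M := lt_of_le_of_ne hM (Ne.symm hM0)
    have h : t ^ α ≤ K * Real.Gamma (α + 1) / M :=
      calc t ^ α ≤ ((K * Real.Gamma (α + 1) / M) ^ (1 / α)) ^ α :=
            Real.rpow_le_rpow ht (htT.trans (min_le_right _ _)) hα.le
        _ = K * Real.Gamma (α + 1) / M := by
            rw [← Real.rpow_mul (by positivity), one_div_mul_cancel hα.ne', Real.rpow_one]
    rw [le_div_iff₀ hMpos] at h
    linarith

theorem caputo_ivp_existence_uniqueness_general
    (α : ℝ) (hα : 0 < α ∧ α ≤ 1) (y₀ K T L : ℝ) (hK : 0 < K) (hL : 0 < L)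
    (G : Set (ℝ × ℝ)) (hG : G = {p : ℝ × ℝ | p.1 ∈ Set.Icc 0 T ∧ |p.2 - y₀| ≤ K})
    (f : ℝ → ℝ → ℝ)
    (hf : ContinuousOn (fun p : ℝ × ℝ => f p.1 p.2) G)
    (hlip : ∀ t y₁ y₂, (t, y₁) ∈ G → (t, y₂) ∈ G → |f t y₁ - f t y₂| ≤ L * |y₁ - y₂|)
    (M : ℝ) (hM : M = sSup ((fun p : ℝ × ℝ => |f p.1 p.2|) '' G))
    (Tstar : ℝ)
    (hTs : Tstar = if M = 0 then T else min T ((K * Real.Gamma (α + 1) / M) ^ (1 / α))) :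
    ∃ y : ℝ → ℝ,
      (ContinuousOn y (Set.Icc 0 Tstar) ∧
        (∀ t ∈ Set.Icc 0 Tstar, |y t - y₀| ≤ K) ∧
        (∀ t ∈ Set.Icc 0 Tstar,
          y t = y₀ + (1 / Real.Gamma α) * ∫ s in (0 : ℝ)..t, (t - s) ^ (α - 1) * f s (y s))) ∧
      ∀ z : ℝ → ℝ,
        (ContinuousOn z (Set.Icc 0 Tstar) ∧
          (∀ t ∈ Set.Icc 0 Tstar, |z t - y₀| ≤ K) ∧
          (∀ t ∈ Set.Icc 0 Tstar,
            z t = y₀ + (1 / Real.Gamma α) * ∫ s in (0 : ℝ)..t, (t - s) ^ (α - 1) * f s (z s))) →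
        ∀ t ∈ Set.Icc 0 Tstar, z t = y t := by
  obtain ⟨hα0, hα1⟩ := hα
  have hGc : IsCompact G := hG ▸ isCompact_Icc.prod (isCompact_closedBall y₀ K)
  have hfM : ∀ p ∈ G, |f p.1 p.2| ≤ M := fun p hp =>
    hM ▸ le_csSup (hGc.image_of_continuousOn hf.abs).bddAbove (mem_image_of_mem _ hp)
  have hM0 : 0 ≤ M := hM ▸ Real.sSup_nonneg (by rintro _ ⟨p, -, rfl⟩; exact abs_nonneg _)
  obtain ⟨F, hFc, hFM, hFL, hFf⟩ := exists_extension_of_strip hK.le hL.le hG hf hfM hlip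
  have hI : Icc 0 Tstar ⊆ Icc 0 T :=
    Icc_subset_Icc le_rfl (by rw [hTs]; split_ifs; exacts [le_rfl, min_le_left _ _])
  have hFc' := hFc.mono (prod_mono hI subset_rfl)
  have hsol : ∀ u, (∀ t ∈ Icc 0 Tstar, |u t - y₀| ≤ K) → ∀ t ∈ Icc 0 Tstar,
      volterraPicard α y₀ F u t =
        y₀ + (1 / Real.Gamma α) * ∫ s in (0 : ℝ)..t, (t - s) ^ (α - 1) * f s (u s) :=
    fun u hu t ht => congrArg (y₀ + ·) (riemannLiouvilleIntegral_congr ht.1 fun s hs =>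
      hFf s _ (hu s ⟨hs.1, hs.2.trans ht.2⟩))
  set r := (2 * L) ^ α⁻¹
  have hq : L * r⁻¹ ^ α = 1 / 2 := by
    rw [Real.inv_rpow (by positivity), Real.rpow_inv_rpow (by positivity) hα0.ne']
    field_simp
  obtain ⟨y, hyc, hyP, hyuniq⟩ := exists_unique_fixedPoint_of_weighted_contraction
    (s := Icc 0 Tstar) (w := fun t => Real.exp (r * t)) (P := volterraPicard α y₀ F)
    (q := 1 / 2) (by fun_prop) (fun _ _ => Real.exp_pos _) (by norm_num)
    (fun u hu => continuousOn_volterraPicard hα0 hα1 hFc' hu)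
    (fun u v hu hv c hc huv t ht =>
      (abs_volterraPicard_sub_volterraPicard_le hα0 hL.le hc (by positivity) hFc'
        (fun s hs => hFL s (hI hs)) hu hv huv ht).trans_eq (by rw [hq]; norm_num))
  have hyK : ∀ t ∈ Icc 0 Tstar, |y t - y₀| ≤ K := fun t ht =>
    hyP t ht ▸ (abs_volterraPicard_sub_le hα0 (fun s hs => hFM s (hI hs)) ht).trans
      (mul_rpow_div_Gamma_le hα0 hM0 hK.le ht.1 (hTs ▸ ht.2))
  exact ⟨y, ⟨hyc, hyK, fun t ht => (hyP t ht).symm.trans (hsol y hyK t ht)⟩,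
    fun z ⟨hzc, hzK, hz⟩ => hyuniq z hzc fun t ht => (hsol z hzK t ht).trans (hz t ht).symm⟩

/-- Existence and uniqueness of a continuous solution of the Volterra integral equation
equivalent to the Caputo initial-value problem `ᶜ₀D^α y = f(t, y)`, `y(0) = y₀`. -/
theorem caputo_ivp_existence_uniqueness
    (α : ℝ) (hα : 0 < α ∧ α ≤ 1) (y₀ K T L : ℝ) (hK : 0 < K) (hT : 0 < T) (hL : 0 < L)
    (G : Set (ℝ × ℝ)) (hG : G = {p : ℝ × ℝ | p.1 ∈ Set.Icc 0 T ∧ |p.2 - y₀| ≤ K})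
    (f : ℝ → ℝ → ℝ)
    (hf : ContinuousOn (fun p : ℝ × ℝ => f p.1 p.2) G)
    (hlip : ∀ t y₁ y₂, (t, y₁) ∈ G → (t, y₂) ∈ G → |f t y₁ - f t y₂| ≤ L * |y₁ - y₂|)
    (M : ℝ) (hM : M = sSup ((fun p : ℝ × ℝ => |f p.1 p.2|) '' G))
    (Tstar : ℝ)
    (hTs : Tstar = if M = 0 then T else min T ((K * Real.Gamma (α + 1) / M) ^ (1 / α))) :
    ∃ y : ℝ → ℝ,
      (ContinuousOn y (Set.Icc 0 Tstar) ∧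
        (∀ t ∈ Set.Icc 0 Tstar, |y t - y₀| ≤ K) ∧
        (∀ t ∈ Set.Icc 0 Tstar,
          y t = y₀ + (1 / Real.Gamma α) * ∫ s in (0 : ℝ)..t, (t - s) ^ (α - 1) * f s (y s))) ∧
      ∀ z : ℝ → ℝ,
        (ContinuousOn z (Set.Icc 0 Tstar) ∧
          (∀ t ∈ Set.Icc 0 Tstar, |z t - y₀| ≤ K) ∧
          (∀ t ∈ Set.Icc 0 Tstar,
            z t = y₀ + (1 / Real.Gamma α) * ∫ s in (0 : ℝ)..t, (t - s) ^ (α - 1) * f s (z s))) →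
        ∀ t ∈ Set.Icc 0 Tstar, z t = y t :=
  caputo_ivp_existence_uniqueness_general α hα y₀ K T L hK hL G hG f hf hlip M hM Tstar hTs
end

section
/- Let 0 < α ≤ 1, h > 0, L > 0, C ≥ 0, p ≥ 1, and let Φ : [t₀,T] × ℝ × [0,h₀] → ℝ satisfy the Lipschitz condition |Φ(t,y,h) − Φ(t,z,h)| ≤ L|y − z| for all admissible t, y, z, h. Let t_n = t₀ + nh, let (Y_n) be given exact values satisfying Y_{n+1} = Y_n + h^α Φ(t_n, Y_n, h) + T_n with |T_n| ≤ C h^{pα} for all n, and let (y_n) be the numerical solution defined by y_{n+1} = y_n + h^α Φ(t_n, y_n, h) with y₀ = Y₀. Then for every n ≥ 0 the error e_n = Y_n − y_n satisfies |e_n| ≤ C h^{pα} · (e^{n h^α L} − 1)/(h^α L). -/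
/-- Global error bound for a one-step fractional-order method
`y_{n+1} = y_n + h^α Φ(t_n, y_n, h)` with Lipschitz increment function `Φ` and
local truncation error bounded by `C h^{pα}`. -/
theorem fork_error_bound
    (α h L C p t₀ h₀ : ℝ)
    (hα : 0 < α ∧ α ≤ 1) (hh : 0 < h) (hh₀ : h ≤ h₀) (hL : 0 < L) (hC : 0 ≤ C) (hp : 1 ≤ p)
    (Φ : ℝ → ℝ → ℝ → ℝ)
    (hlip : ∀ t y z h', |Φ t y h' - Φ t z h'| ≤ L * |y - z|)
    (t : ℕ → ℝ) (ht : ∀ n : ℕ, t n = t₀ + n * h)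
    (Y y : ℕ → ℝ) (T : ℕ → ℝ)
    (hY : ∀ n : ℕ, Y (n + 1) = Y n + h ^ α * Φ (t n) (Y n) h + T n)
    (hT : ∀ n : ℕ, |T n| ≤ C * h ^ (p * α))
    (hy : ∀ n : ℕ, y (n + 1) = y n + h ^ α * Φ (t n) (y n) h)
    (hy0 : y 0 = Y 0) :
    ∀ n : ℕ, |Y n - y n| ≤ C * h ^ (p * α) * (Real.exp (n * h ^ α * L) - 1) / (h ^ α * L) := by
  set a : ℝ := h ^ α * L with ha_def
  have hhα : (0:ℝ) < h ^ α := Real.rpow_pos_of_pos hh α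
  have ha : 0 < a := mul_pos hhα hL
  set D : ℝ := C * h ^ (p * α) with hD_def
  have hD : 0 ≤ D := mul_nonneg hC (Real.rpow_pos_of_pos hh _).le
  intro n
  induction n with
  | zero =>
    simp [hy0]
  | succ n ih =>
    have key : |Y (n+1) - y (n+1)| ≤ (1 + a) * |Y n - y n| + D := by
      have h1 : Y (n+1) - y (n+1)
          = (Y n - y n) + h ^ α * (Φ (t n) (Y n) h - Φ (t n) (y n) h) + T n := by
        rw [hY n, hy n]; ring
      calc |Y (n+1) - y (n+1)|
          ≤ |(Y n - y n) + h ^ α * (Φ (t n) (Y n) h - Φ (t n) (y n) h)| + |T n| := by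
            rw [h1]; exact abs_add_le _ _
        _ ≤ |Y n - y n| + |h ^ α * (Φ (t n) (Y n) h - Φ (t n) (y n) h)| + |T n| := by
            gcongr; exact abs_add_le _ _
        _ ≤ |Y n - y n| + h ^ α * (L * |Y n - y n|) + D := by
            gcongr
            · rw [abs_mul, abs_of_pos hhα]
              gcongr
              exact hlip _ _ _ _
            · exact hT n
        _ = (1 + a) * |Y n - y n| + D := by rw [ha_def]; ring
    have hexp : (1 + a) ≤ Real.exp a := by linarith [Real.add_one_le_exp a]
    have hstep : (1 + a) * (D * (Real.exp (n * a) - 1) / a) + D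
        ≤ D * (Real.exp ((n+1 : ℕ) * a) - 1) / a := by
      have heq : (1 + a) * (D * (Real.exp (n * a) - 1) / a) + D
          = ((1 + a) * (D * (Real.exp (n * a) - 1)) + D * a) / a := by
        field_simp
      rw [heq, div_le_div_iff_of_pos_right ha]
      have hE : (1:ℝ) ≤ Real.exp (n * a) := by
        rw [← Real.exp_zero]
        exact Real.exp_le_exp.mpr (by positivity)
      have h2 : (1 + a) * Real.exp (n * a) ≤ Real.exp ((n+1 : ℕ) * a) := by
        push_cast
        rw [show ((n:ℝ)+1) * a = a + n * a by ring, Real.exp_add]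
        exact mul_le_mul_of_nonneg_right hexp (Real.exp_pos _).le
      calc (1 + a) * (D * (Real.exp (n * a) - 1)) + D * a
          = D * ((1 + a) * Real.exp (n * a) - 1) := by ring
        _ ≤ D * (Real.exp ((n+1 : ℕ) * a) - 1) := by
            apply mul_le_mul_of_nonneg_left _ hD
            linarith
    have harg : ∀ m : ℕ, (m : ℝ) * h ^ α * L = m * a := by
      intro m; rw [ha_def]; ring
    rw [harg] at ih ⊢
    calc |Y (n+1) - y (n+1)| ≤ (1 + a) * |Y n - y n| + D := key
      _ ≤ (1 + a) * (D * (Real.exp (n * a) - 1) / a) + D := by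
          have := mul_le_mul_of_nonneg_left ih (by linarith : (0:ℝ) ≤ 1 + a)
          linarith
      _ ≤ D * (Real.exp ((n+1 : ℕ) * a) - 1) / a := hstep
end

section
/- Let 0 < α ≤ 1 and take c₂^α = 2Γ(α+1)²/Γ(2α+1), so that the 2-stage EFORK growth factor is E(z) = 1 + z/Γ(α+1) + z²/Γ(2α+1). Then for every real z with −Γ(2α+1)/Γ(α+1) ≤ z ≤ 0, one has |E(z)| ≤ 1; i.e., the interval of absolute stability of this method contains [−Γ(2α+1)/Γ(α+1), 0). -/
open Real

lemma efork2_logGamma_ineq (x y a b : ℝ) (hx : 0 < x) (hy : 0 < y)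
    (ha : 0 ≤ a) (hb : 0 ≤ b) (hab : a + b = 1) :
    Real.log (Real.Gamma (a * x + b * y)) ≤ a * Real.log (Real.Gamma x) + b * Real.log (Real.Gamma y) := by
  have := Real.convexOn_log_Gamma.2 (Set.mem_Ioi.mpr hx) (Set.mem_Ioi.mpr hy) ha hb hab
  simpa using this

lemma efork2_gamma_upper (α : ℝ) (h0 : 0 < α) (h1 : α ≤ 1) :
    Real.Gamma (2 * α + 1) ≤ 2 := by
  have h3 : Real.Gamma (3 : ℝ) = 2 := by
    have := Real.Gamma_nat_eq_factorial 2
    norm_num at this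
    convert this using 2
    norm_num
  have key := efork2_logGamma_ineq 1 3 (1 - α) α (by norm_num) (by norm_num)
    (by linarith) h0.le (by ring)
  rw [Real.Gamma_one, Real.log_one, h3] at key
  have heq : (1 - α) * 1 + α * 3 = 2 * α + 1 := by ring
  rw [heq] at key
  have hpos : 0 < Real.Gamma (2 * α + 1) := Real.Gamma_pos_of_pos (by linarith)
  have hlog2 : α * Real.log 2 ≤ Real.log 2 := by
    nlinarith [Real.log_pos (by norm_num : (1:ℝ) < 2)]
  have : Real.log (Real.Gamma (2 * α + 1)) ≤ Real.log 2 := by linarith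
  calc Real.Gamma (2 * α + 1) = Real.exp (Real.log (Real.Gamma (2 * α + 1))) :=
        (Real.exp_log hpos).symm
    _ ≤ Real.exp (Real.log 2) := Real.exp_le_exp.mpr this
    _ = 2 := Real.exp_log (by norm_num)

lemma efork2_gamma_lower (α : ℝ) (h0 : 0 < α) (h1 : α ≤ 1) :
    (1 : ℝ) / 2 ≤ Real.Gamma (α + 1) := by
  have h3 : Real.Gamma (3 : ℝ) = 2 := by
    have := Real.Gamma_nat_eq_factorial 2
    norm_num at this
    convert this using 2
    norm_num
  have h2 : Real.Gamma (2 : ℝ) = 1 := by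
    have := Real.Gamma_nat_eq_factorial 1
    norm_num at this
    convert this using 2
    norm_num
  have hden : 0 < 2 - α := by linarith
  have key := efork2_logGamma_ineq (α + 1) 3 (1 / (2 - α)) ((1 - α) / (2 - α))
    (by linarith) (by norm_num) (by positivity) (by apply div_nonneg <;> linarith)
    (by field_simp; ring_nf)
  have heq : 1 / (2 - α) * (α + 1) + (1 - α) / (2 - α) * 3 = 2 := by
    field_simp
    try ring
  rw [heq, h3, h2, Real.log_one] at key
  have hApos : 0 < Real.Gamma (α + 1) := Real.Gamma_pos_of_pos (by linarith)
  have hlog2pos : 0 < Real.log 2 := Real.log_pos (by norm_num)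
  have hkey' : 0 ≤ Real.log (Real.Gamma (α + 1)) + (1 - α) * Real.log 2 := by
    have hm := mul_nonneg hden.le key
    have e1 : (2 - α) * (1 / (2 - α) * Real.log (Real.Gamma (α + 1))
        + (1 - α) / (2 - α) * Real.log 2)
        = Real.log (Real.Gamma (α + 1)) + (1 - α) * Real.log 2 := by
      field_simp
      try ring
    linarith [e1 ▸ hm]
  have hlog : -Real.log 2 ≤ Real.log (Real.Gamma (α + 1)) := by nlinarith
  calc (1 : ℝ) / 2 = Real.exp (-Real.log 2) := by
        rw [Real.exp_neg, Real.exp_log] <;> norm_num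
    _ ≤ Real.exp (Real.log (Real.Gamma (α + 1))) := Real.exp_le_exp.mpr hlog
    _ = Real.Gamma (α + 1) := Real.exp_log hApos

/-- For the 2-stage EFORK method with `c₂^α = 2Γ(α+1)²/Γ(2α+1)`, the growth factor
`E(z) = 1 + z/Γ(α+1) + z²/Γ(2α+1)` satisfies `|E(z)| ≤ 1` on `[−Γ(2α+1)/Γ(α+1), 0]`. -/
theorem efork2_optimal_stability
    (α : ℝ) (hα : 0 < α ∧ α ≤ 1) :
    ∀ z : ℝ, -Real.Gamma (2 * α + 1) / Real.Gamma (α + 1) ≤ z → z ≤ 0 →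
      |1 + z / Real.Gamma (α + 1) + z ^ 2 / Real.Gamma (2 * α + 1)| ≤ 1 := by
  obtain ⟨h0, h1⟩ := hα
  intro z hz1 hz2
  set A := Real.Gamma (α + 1) with hA_def
  set B := Real.Gamma (2 * α + 1) with hB_def
  have hA : 0 < A := Real.Gamma_pos_of_pos (by linarith)
  have hB : 0 < B := Real.Gamma_pos_of_pos (by linarith)
  have hBle : B ≤ 2 := efork2_gamma_upper α h0 h1
  have hAge : (1 : ℝ) / 2 ≤ A := efork2_gamma_lower α h0 h1
  have hB8 : B ≤ 8 * A ^ 2 := by nlinarith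
  have hzA : -B ≤ z * A := (div_le_iff₀ hA).mp hz1
  have hAB : (0:ℝ) < A * B := mul_pos hA hB
  rw [abs_le]
  constructor
  · have e : 2 + z / A + z ^ 2 / B = (2 * A * B + z * B + z ^ 2 * A) / (A * B) := by
      field_simp
      try ring
    have hnum : 0 ≤ 2 * A * B + z * B + z ^ 2 * A := by
      nlinarith [sq_nonneg (2 * A * z + B), mul_nonneg hB.le (by nlinarith : (0:ℝ) ≤ 8 * A ^ 2 - B)]
    have : 0 ≤ 2 + z / A + z ^ 2 / B := by
      rw [e]; exact div_nonneg hnum hAB.le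
    linarith
  · have e : z / A + z ^ 2 / B = (z * B + z ^ 2 * A) / (A * B) := by
      field_simp
      try ring
    have hnum : z * B + z ^ 2 * A ≤ 0 := by
      nlinarith [mul_nonneg (neg_nonneg.mpr hz2) (by linarith : (0:ℝ) ≤ B + z * A)]
    have : z / A + z ^ 2 / B ≤ 0 := by
      rw [e]; exact div_nonpos_of_nonpos_of_nonneg hnum hAB.le
    linarith
end

section
/- For every α with 0 < α ≤ 1, the Gamma function satisfies Γ(2α+1) ≤ 2·Γ(α+1)², with equality exactly at α = 1. -/
open Real intervalIntegral

/-- Real Beta identity specialized to equal arguments. -/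
lemma gamma_sq_eq_beta (α : ℝ) (hα0 : 0 < α) :
    Real.Gamma (α + 1) ^ 2 =
      Real.Gamma (2 * α + 2) * ∫ x in (0:ℝ)..1, x ^ α * (1 - x) ^ α := by
  have hre : 0 < Complex.re ((α : ℂ) + 1) := by simp; positivity
  have h := Complex.Gamma_mul_Gamma_eq_betaIntegral hre hre
  have hbeta : Complex.betaIntegral ((α : ℂ) + 1) ((α : ℂ) + 1)
      = ((∫ x in (0:ℝ)..1, x ^ α * (1 - x) ^ α : ℝ) : ℂ) := by
    rw [Complex.betaIntegral]
    rw [show ((∫ x in (0:ℝ)..1, x ^ α * (1 - x) ^ α : ℝ) : ℂ)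
        = ∫ x in (0:ℝ)..1, ((x ^ α * (1 - x) ^ α : ℝ) : ℂ) from
      (RCLike.intervalIntegral_ofReal).symm]
    apply intervalIntegral.integral_congr
    intro x hx
    rw [Set.uIcc_of_le (by norm_num)] at hx
    obtain ⟨hx0, hx1⟩ := hx
    have h1x : (0:ℝ) ≤ 1 - x := by linarith
    show (x:ℂ) ^ ((α:ℂ) + 1 - 1) * ((1:ℂ) - (x:ℂ)) ^ ((α:ℂ) + 1 - 1)
        = ((x ^ α * (1 - x) ^ α : ℝ) : ℂ)
    rw [show (α : ℂ) + 1 - 1 = (α : ℂ) by ring,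
      show (1:ℂ) - (x:ℂ) = ((1 - x : ℝ) : ℂ) by push_cast; ring,
      ← Complex.ofReal_cpow hx0, ← Complex.ofReal_cpow h1x, ← Complex.ofReal_mul]
  rw [hbeta] at h
  have h2 : ((α : ℂ) + 1) + ((α : ℂ) + 1) = ((2 * α + 2 : ℝ) : ℂ) := by
    push_cast; ring
  rw [h2, show ((α : ℂ) + 1) = ((α + 1 : ℝ) : ℂ) by push_cast; ring] at h
  rw [Complex.Gamma_ofReal, Complex.Gamma_ofReal, ← Complex.ofReal_mul,
    ← Complex.ofReal_mul] at h
  have := Complex.ofReal_injective h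
  rw [← this]; ring

/-- Pointwise lower bound for the beta integrand. -/
lemma beta_integrand_lb (α : ℝ) (hα0 : 0 < α) (hα1 : α ≤ 1) {x : ℝ}
    (hx0 : 0 ≤ x) (hx1 : x ≤ 1) :
    (4:ℝ) ^ (1 - α) * (x * (1 - x)) ≤ x ^ α * (1 - x) ^ α := by
  have h1x : (0:ℝ) ≤ 1 - x := by linarith
  rw [← Real.mul_rpow hx0 h1x]
  set t := x * (1 - x) with ht
  have ht0 : 0 ≤ t := mul_nonneg hx0 h1x
  have htq : t ≤ 1 / 4 := by nlinarith [sq_nonneg (2 * x - 1)]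
  rcases eq_or_lt_of_le ht0 with h | h
  · rw [← h, Real.zero_rpow (ne_of_gt hα0), mul_zero]
  · have key : (4:ℝ) ^ (1 - α) ≤ t ^ (α - 1) := by
      have : ((1:ℝ)/4) ^ (α - 1) ≤ t ^ (α - 1) :=
        Real.rpow_le_rpow_of_nonpos h htq (by linarith)
      calc (4:ℝ) ^ (1 - α) = ((1:ℝ)/4) ^ (α - 1) := by
            rw [show (1:ℝ)/4 = 4⁻¹ by norm_num,
              Real.inv_rpow (by norm_num), ← Real.rpow_neg (by norm_num)]
            ring_nf
        _ ≤ t ^ (α - 1) := this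
    calc (4:ℝ) ^ (1 - α) * t ≤ t ^ (α - 1) * t := by
          exact mul_le_mul_of_nonneg_right key ht0
      _ = t ^ α := by
          rw [← Real.rpow_add_one (ne_of_gt h)]
          norm_num

/-- For `0 < α ≤ 1`, the Gamma function satisfies `Γ(2α+1) ≤ 2Γ(α+1)²`,
with equality exactly at `α = 1`. -/
theorem gamma_two_alpha_le
    (α : ℝ) (hα0 : 0 < α) (hα1 : α ≤ 1) :
    Real.Gamma (2 * α + 1) ≤ 2 * Real.Gamma (α + 1) ^ 2 ∧
      (Real.Gamma (2 * α + 1) = 2 * Real.Gamma (α + 1) ^ 2 ↔ α = 1) := by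
  -- Bernoulli: 4^α ≤ 1 + 3α
  have bern : (4:ℝ) ^ α ≤ 1 + 3 * α := by
    have := rpow_one_add_le_one_add_mul_self (s := 3) (by norm_num) hα0.le hα1
    norm_num at this ⊢
    linarith
  -- integrability / continuity
  have hcont : Continuous fun x : ℝ => x ^ α * (1 - x) ^ α := by
    apply Continuous.mul
    · exact continuous_id.rpow_const fun x => Or.inr hα0.le
    · exact (continuous_const.sub continuous_id).rpow_const fun x => Or.inr hα0.le
  -- integral lower bound
  have hint : (4:ℝ) ^ (1 - α) / 6 ≤ ∫ x in (0:ℝ)..1, x ^ α * (1 - x) ^ α := by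
    have h1 : ∫ x in (0:ℝ)..1, (4:ℝ) ^ (1 - α) * (x * (1 - x))
        = (4:ℝ) ^ (1 - α) / 6 := by
      rw [intervalIntegral.integral_const_mul]
      have : ∫ x in (0:ℝ)..1, x * (1 - x) = 1/6 := by
        have : (fun x : ℝ => x * (1 - x)) = fun x : ℝ => x - x ^ 2 := by
          funext x; ring
        rw [this, intervalIntegral.integral_sub (by
            exact intervalIntegral.intervalIntegrable_id)
          (by exact (continuous_pow 2).intervalIntegrable 0 1)]
        simp [integral_pow]
        norm_num
      rw [this]; ring
    rw [← h1]
    apply intervalIntegral.integral_mono_on (by norm_num)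
    · exact ((continuous_const.mul ((continuous_id).mul
        (continuous_const.sub continuous_id))).intervalIntegrable 0 1)
    · exact hcont.intervalIntegrable 0 1
    · intro x hx
      exact beta_integrand_lb α hα0 hα1 hx.1 hx.2
  -- key identity
  have hbeta := gamma_sq_eq_beta α hα0
  have h2a1 : (2 * α + 1) ≠ 0 := by positivity
  have hgadd : Real.Gamma (2 * α + 2) = (2 * α + 1) * Real.Gamma (2 * α + 1) := by
    have := Real.Gamma_add_one h2a1
    rw [show 2 * α + 1 + 1 = 2 * α + 2 by ring] at this
    exact this
  have hG2pos : 0 < Real.Gamma (2 * α + 1) := Real.Gamma_pos_of_pos (by linarith)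
  have h4pos : (0:ℝ) < (4:ℝ) ^ (1 - α) := Real.rpow_pos_of_pos (by norm_num) _
  have h4a : (4:ℝ) ^ (1 - α) = 4 / (4:ℝ) ^ α := by
    rw [Real.rpow_sub (by norm_num), Real.rpow_one]
  have h4apos : (0:ℝ) < (4:ℝ) ^ α := Real.rpow_pos_of_pos (by norm_num) _
  -- main chain: 2 Γ(α+1)² ≥ Γ(2α+1) * (2α+1) * 4^(1-α) / 3
  have hchain : Real.Gamma (2 * α + 1) * ((2 * α + 1) * (4:ℝ) ^ (1 - α) / 3)
      ≤ 2 * Real.Gamma (α + 1) ^ 2 := by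
    rw [hbeta, hgadd]
    have := mul_le_mul_of_nonneg_left hint
      (by positivity : (0:ℝ) ≤ 2 * ((2 * α + 1) * Real.Gamma (2 * α + 1)))
    calc Real.Gamma (2 * α + 1) * ((2 * α + 1) * (4:ℝ) ^ (1 - α) / 3)
        = 2 * ((2 * α + 1) * Real.Gamma (2 * α + 1)) * ((4:ℝ) ^ (1-α) / 6) := by ring
      _ ≤ 2 * ((2 * α + 1) * Real.Gamma (2 * α + 1))
            * ∫ x in (0:ℝ)..1, x ^ α * (1 - x) ^ α := this
      _ = 2 * ((2 * α + 1) * Real.Gamma (2 * α + 1)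
            * ∫ x in (0:ℝ)..1, x ^ α * (1 - x) ^ α) := by ring
  -- factor bound: (2α+1)·4^(1-α)/3 ≥ 1, strict if α < 1
  have hfac : 1 ≤ (2 * α + 1) * (4:ℝ) ^ (1 - α) / 3 := by
    rw [h4a, le_div_iff₀ (by norm_num : (0:ℝ) < 3), ← mul_div_assoc,
      le_div_iff₀ h4apos]
    nlinarith
  constructor
  · calc Real.Gamma (2 * α + 1) = Real.Gamma (2 * α + 1) * 1 := by ring
      _ ≤ Real.Gamma (2 * α + 1) * ((2 * α + 1) * (4:ℝ) ^ (1 - α) / 3) := by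
          exact mul_le_mul_of_nonneg_left hfac hG2pos.le
      _ ≤ 2 * Real.Gamma (α + 1) ^ 2 := hchain
  · constructor
    · intro heq
      by_contra hne
      have hlt : α < 1 := lt_of_le_of_ne hα1 hne
      have hfac' : 1 < (2 * α + 1) * (4:ℝ) ^ (1 - α) / 3 := by
        rw [h4a, lt_div_iff₀ (by norm_num : (0:ℝ) < 3), ← mul_div_assoc,
          lt_div_iff₀ h4apos]
        nlinarith
      have : Real.Gamma (2 * α + 1) < 2 * Real.Gamma (α + 1) ^ 2 := by
        calc Real.Gamma (2 * α + 1) = Real.Gamma (2 * α + 1) * 1 := by ring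
          _ < Real.Gamma (2 * α + 1) * ((2 * α + 1) * (4:ℝ) ^ (1 - α) / 3) := by
              exact (mul_lt_mul_iff_right₀ hG2pos).mpr hfac'
          _ ≤ 2 * Real.Gamma (α + 1) ^ 2 := hchain
      linarith
    · rintro rfl
      have g2 : Real.Gamma 2 = 1 := by
        rw [show (2:ℝ) = 1 + 1 by norm_num, Real.Gamma_add_one one_ne_zero,
          Real.Gamma_one]; ring
      have g3 : Real.Gamma 3 = 2 := by
        rw [show (3:ℝ) = 2 + 1 by norm_num, Real.Gamma_add_one two_ne_zero, g2]; ring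
      norm_num [g2, g3]
end

section
/- Let 0 < α ≤ 1 with 2Γ(2α+1)² ≠ Γ(3α+1), and define c₂^α = 1/(2Γ(α+1)), c₃^α = 1/(4Γ(α+1)), a₂₁ = 1/(2Γ(α+1)²), a₃₁ = (Γ(α+1)²Γ(2α+1) + 2Γ(2α+1)² − Γ(3α+1))/(4Γ(α+1)²(2Γ(2α+1)² − Γ(3α+1))), a₃₂ = −Γ(2α+1)/(4(2Γ(2α+1)² − Γ(3α+1))), w₁ = 8Γ(α+1)²Γ(2α+1)/Γ(3α+1) − 6Γ(α+1)²/Γ(2α+1) + 1/Γ(α+1), w₂ = 2Γ(α+1)²(4Γ(2α+1)² − Γ(3α+1))/(Γ(2α+1)Γ(3α+1)), w₃ = −8Γ(α+1)²(2Γ(2α+1)² − Γ(3α+1))/(Γ(2α+1)Γ(3α+1)). Then these values satisfy all six 3-stage order conditions: w₁+w₂+w₃ = 1/Γ(α+1); a₂₁ = c₂^α/Γ(α+1); w₂c₂^{2α} + w₃c₃^{2α} = Γ(2α+1)/Γ(3α+1); a₃₁ + a₃₂ = c₃^α/Γ(α+1); w₂c₂^α + w₃c₃^α = Γ(α+1)/Γ(2α+1);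 and w₃a₃₂c₂^α = Γ(α+1)/Γ(3α+1). -/
/-! With `g₁ = Γ(α+1)`, `g₂ = Γ(2α+1)`, `g₃ = Γ(3α+1)`, all positive for `α > 0`, the order
conditions become rational identities in `g₁, g₂, g₃`. The coefficients solve a triangular system:
for the chosen `c₂, c₃`, the two conditions in `c^α` and `c^{2α}` determine `w₂, w₃`, then
`w₃ a₃₂ c₂^α` determines `a₃₂`, and the remaining conditions give `w₁, a₂₁, a₃₁`. -/

namespace Efork3

variable {K : Type*} [Field K] (g₁ g₂ g₃ : K)

def c₂ : K := 1 / (2 * g₁)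

def c₃ : K := 1 / (4 * g₁)

def a₂₁ : K := 1 / (2 * g₁ ^ 2)

def a₃₁ : K := (g₁ ^ 2 * g₂ + 2 * g₂ ^ 2 - g₃) / (4 * g₁ ^ 2 * (2 * g₂ ^ 2 - g₃))

def a₃₂ : K := -g₂ / (4 * (2 * g₂ ^ 2 - g₃))

def w₁ : K := 8 * g₁ ^ 2 * g₂ / g₃ - 6 * g₁ ^ 2 / g₂ + 1 / g₁

def w₂ : K := 2 * g₁ ^ 2 * (4 * g₂ ^ 2 - g₃) / (g₂ * g₃)

def w₃ : K := -(8 * g₁ ^ 2 * (2 * g₂ ^ 2 - g₃)) / (g₂ * g₃)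

variable {g₁ g₂ g₃}

theorem a₂₁_eq : a₂₁ g₁ = c₂ g₁ / g₁ := by
  unfold a₂₁ c₂
  ring

theorem w₁_add_w₂_add_w₃ (h₂ : g₂ ≠ 0) (h₃ : g₃ ≠ 0) :
    w₁ g₁ g₂ g₃ + w₂ g₁ g₂ g₃ + w₃ g₁ g₂ g₃ = 1 / g₁ := by
  unfold w₁ w₂ w₃
  field_simp
  ring

variable [CharZero K]

theorem w₂_mul_c₂_sq_add_w₃_mul_c₃_sq (h₁ : g₁ ≠ 0) (h₂ : g₂ ≠ 0) (h₃ : g₃ ≠ 0) :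
    w₂ g₁ g₂ g₃ * c₂ g₁ ^ 2 + w₃ g₁ g₂ g₃ * c₃ g₁ ^ 2 = g₂ / g₃ := by
  unfold w₂ w₃ c₂ c₃
  field_simp
  ring

theorem a₃₁_add_a₃₂ (h₁ : g₁ ≠ 0) (hD : 2 * g₂ ^ 2 - g₃ ≠ 0) :
    a₃₁ g₁ g₂ g₃ + a₃₂ g₂ g₃ = c₃ g₁ / g₁ := by
  unfold a₃₁ a₃₂ c₃
  rw [div_add_div _ _ (by simp [h₁, hD]) (by simp [hD]), div_div,
    div_eq_div_iff (by simp [h₁, hD]) (by simp [h₁])]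
  ring

theorem w₂_mul_c₂_add_w₃_mul_c₃ (h₁ : g₁ ≠ 0) (h₂ : g₂ ≠ 0) (h₃ : g₃ ≠ 0) :
    w₂ g₁ g₂ g₃ * c₂ g₁ + w₃ g₁ g₂ g₃ * c₃ g₁ = g₁ / g₂ := by
  unfold w₂ w₃ c₂ c₃
  field_simp
  ring

theorem w₃_mul_a₃₂_mul_c₂ (h₁ : g₁ ≠ 0) (h₂ : g₂ ≠ 0) (hD : 2 * g₂ ^ 2 - g₃ ≠ 0) :
    w₃ g₁ g₂ g₃ * a₃₂ g₂ g₃ * c₂ g₁ = g₁ / g₃ := by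
  unfold w₃ a₃₂ c₂
  field_simp
  ring

end Efork3

/-- The tabulated coefficients of the 3-stage EFORK method satisfy all six order
conditions of order `3α`. Here `c2a`, `c3a` denote `c₂^α`, `c₃^α`. -/
theorem efork3_coefficients_satisfy_order_conditions
    (α : ℝ) (hα : 0 < α ∧ α ≤ 1)
    (hne : 2 * Real.Gamma (2 * α + 1) ^ 2 ≠ Real.Gamma (3 * α + 1))
    (c2a c3a a21 a31 a32 w1 w2 w3 : ℝ)
    (hc2 : c2a = 1 / (2 * Real.Gamma (α + 1)))
    (hc3 : c3a = 1 / (4 * Real.Gamma (α + 1)))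
    (ha21 : a21 = 1 / (2 * Real.Gamma (α + 1) ^ 2))
    (ha31 : a31 =
      (Real.Gamma (α + 1) ^ 2 * Real.Gamma (2 * α + 1) + 2 * Real.Gamma (2 * α + 1) ^ 2 -
          Real.Gamma (3 * α + 1)) /
        (4 * Real.Gamma (α + 1) ^ 2 *
          (2 * Real.Gamma (2 * α + 1) ^ 2 - Real.Gamma (3 * α + 1))))
    (ha32 : a32 = -Real.Gamma (2 * α + 1) /
        (4 * (2 * Real.Gamma (2 * α + 1) ^ 2 - Real.Gamma (3 * α + 1))))
    (hw1 : w1 = 8 * Real.Gamma (α + 1) ^ 2 * Real.Gamma (2 * α + 1) / Real.Gamma (3 * α + 1) -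
        6 * Real.Gamma (α + 1) ^ 2 / Real.Gamma (2 * α + 1) + 1 / Real.Gamma (α + 1))
    (hw2 : w2 = 2 * Real.Gamma (α + 1) ^ 2 *
        (4 * Real.Gamma (2 * α + 1) ^ 2 - Real.Gamma (3 * α + 1)) /
        (Real.Gamma (2 * α + 1) * Real.Gamma (3 * α + 1)))
    (hw3 : w3 = -(8 * Real.Gamma (α + 1) ^ 2 *
        (2 * Real.Gamma (2 * α + 1) ^ 2 - Real.Gamma (3 * α + 1))) /
        (Real.Gamma (2 * α + 1) * Real.Gamma (3 * α + 1))) :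
    w1 + w2 + w3 = 1 / Real.Gamma (α + 1) ∧
    a21 = c2a / Real.Gamma (α + 1) ∧
    w2 * c2a ^ 2 + w3 * c3a ^ 2 = Real.Gamma (2 * α + 1) / Real.Gamma (3 * α + 1) ∧
    a31 + a32 = c3a / Real.Gamma (α + 1) ∧
    w2 * c2a + w3 * c3a = Real.Gamma (α + 1) / Real.Gamma (2 * α + 1) ∧
    w3 * a32 * c2a = Real.Gamma (α + 1) / Real.Gamma (3 * α + 1) := by
  have hΓ : ∀ x : ℝ, 0 < x → Real.Gamma (x + 1) ≠ 0 := fun x hx =>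
    (Real.Gamma_pos_of_pos (by linarith)).ne'
  have h₁ := hΓ α hα.1
  have h₂ := hΓ (2 * α) (by linarith [hα.1])
  have h₃ := hΓ (3 * α) (by linarith [hα.1])
  have hD := sub_ne_zero.mpr hne
  subst hc2 hc3 ha21 ha31 ha32 hw1 hw2 hw3
  exact ⟨Efork3.w₁_add_w₂_add_w₃ h₂ h₃, Efork3.a₂₁_eq,
    Efork3.w₂_mul_c₂_sq_add_w₃_mul_c₃_sq h₁ h₂ h₃, Efork3.a₃₁_add_a₃₂ h₁ hD,
    Efork3.w₂_mul_c₂_add_w₃_mul_c₃ h₁ h₂ h₃, Efork3.w₃_mul_a₃₂_mul_c₂ h₁ h₂ hD⟩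
end

section
/- Let 0 < α ≤ 1 and let real coefficients w₁, w₂, w₃, a₂₁, a₃₁, a₃₂, c₂^α, c₃^α satisfy the 3-stage order conditions w₁+w₂+w₃ = 1/Γ(α+1), a₂₁ = c₂^α/Γ(α+1), a₃₁+a₃₂ = c₃^α/Γ(α+1), w₂c₂^α + w₃c₃^α = Γ(α+1)/Γ(2α+1), and w₃a₃₂c₂^α = Γ(α+1)/Γ(3α+1). Then for all real z and y, with K₁ = z·y, K₂ = z·(y + a₂₁K₁), K₃ = z·(y + a₃₁K₁ + a₃₂K₂), one has y + w₁K₁ + w₂K₂ + w₃K₃ = (1 + z/Γ(α+1) + z²/Γ(2α+1) + z³/Γ(3α+1)) · y. Hence the 3-stage EFORK method applied to ᶜD^α y = λy has growth factor E(z) = 1 + z/Γ(α+1) + z²/Γ(2α+1) + z³/Γ(3α+1) with z = λh^α. -/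
/-!
For the linear test equation every stage is a polynomial in `z` times `y`, so one step multiplies
`y` by the stability polynomial `1 + (∑ wᵢ) z + (w₂a₂₁ + w₃(a₃₁ + a₃₂)) z² + w₃a₃₂a₂₁ z³`.
The order conditions identify these three coefficients with `1/Γ(α+1)`, `1/Γ(2α+1)` and
`1/Γ(3α+1)`; the only analytic input is `Γ(α+1) ≠ 0`, by which the last two conditions are divided.
-/

theorem efork3_step_eq_stabilityPoly {R : Type*} [CommRing R] (w₁ w₂ w₃ a₂₁ a₃₁ a₃₂ z y : R) :
    y + w₁ * (z * y) + w₂ * (z * (y + a₂₁ * (z * y))) +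
        w₃ * (z * (y + a₃₁ * (z * y) + a₃₂ * (z * (y + a₂₁ * (z * y))))) =
      (1 + (w₁ + w₂ + w₃) * z + (w₂ * a₂₁ + w₃ * (a₃₁ + a₃₂)) * z ^ 2 +
          w₃ * a₃₂ * a₂₁ * z ^ 3) * y := by
  ring

section OrderConditions

variable {K : Type*} [Field K] {w₂ w₃ a₂₁ a₃₁ a₃₂ c₂ c₃ g₁ g : K}

theorem efork3_quadratic_coeff (hg₁ : g₁ ≠ 0) (h₂ : a₂₁ = c₂ / g₁) (h₃ : a₃₁ + a₃₂ = c₃ / g₁)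
    (h₄ : w₂ * c₂ + w₃ * c₃ = g₁ / g) :
    w₂ * a₂₁ + w₃ * (a₃₁ + a₃₂) = 1 / g :=
  calc w₂ * a₂₁ + w₃ * (a₃₁ + a₃₂) = (w₂ * c₂ + w₃ * c₃) / g₁ := by rw [h₂, h₃]; ring
    _ = 1 / g := by rw [h₄]; field_simp

theorem efork3_cubic_coeff (hg₁ : g₁ ≠ 0) (h₂ : a₂₁ = c₂ / g₁) (h₅ : w₃ * a₃₂ * c₂ = g₁ / g) :
    w₃ * a₃₂ * a₂₁ = 1 / g :=
  calc w₃ * a₃₂ * a₂₁ = w₃ * a₃₂ * c₂ / g₁ := by rw [h₂]; ring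
    _ = 1 / g := by rw [h₅]; field_simp

end OrderConditions

/-- Growth factor of the 3-stage EFORK method applied to the test equation `ᶜD^α y = λ y`:
under the order conditions, one step maps `y` to
`(1 + z/Γ(α+1) + z²/Γ(2α+1) + z³/Γ(3α+1))·y` with `z = λ h^α`. -/
theorem efork3_growth_factor
    (α : ℝ) (hα : 0 < α ∧ α ≤ 1)
    (w₁ w₂ w₃ a₂₁ a₃₁ a₃₂ c2a c3a : ℝ)
    (h1 : w₁ + w₂ + w₃ = 1 / Real.Gamma (α + 1))
    (h2 : a₂₁ = c2a / Real.Gamma (α + 1))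
    (h3 : a₃₁ + a₃₂ = c3a / Real.Gamma (α + 1))
    (h4 : w₂ * c2a + w₃ * c3a = Real.Gamma (α + 1) / Real.Gamma (2 * α + 1))
    (h5 : w₃ * a₃₂ * c2a = Real.Gamma (α + 1) / Real.Gamma (3 * α + 1)) :
    ∀ z y : ℝ,
      y + w₁ * (z * y) + w₂ * (z * (y + a₂₁ * (z * y))) +
          w₃ * (z * (y + a₃₁ * (z * y) + a₃₂ * (z * (y + a₂₁ * (z * y))))) =
        (1 + z / Real.Gamma (α + 1) + z ^ 2 / Real.Gamma (2 * α + 1) +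
            z ^ 3 / Real.Gamma (3 * α + 1)) * y := by
  intro z y
  have hΓ : Real.Gamma (α + 1) ≠ 0 := (Real.Gamma_pos_of_pos (by linarith [hα.1])).ne'
  rw [efork3_step_eq_stabilityPoly, h1, efork3_quadratic_coeff hΓ h2 h3 h4,
    efork3_cubic_coeff hΓ h2 h5]
  ring
end

section
/- Let 0 < α ≤ 1 and define E(z) = 1 + (z/Γ(α+1))/(1 − zΓ(α+1)/Γ(2α+1)). Then for every real z < 0 one has |E(z)| ≤ 1. That is, the interval of absolute stability of the 1-stage implicit fractional order Runge–Kutta method of order 2α is all of (−∞, 0), so the method is A-stable. -/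
private lemma gamma_doubling_le (α : ℝ) (h0 : 0 < α) (h1 : α ≤ 1) :
    Real.Gamma (2 * α + 1) ≤ 2 * Real.Gamma (α + 1) ^ 2 := by
  have h2 : (0:ℝ) < 2 - α := by linarith
  have hG1 : 0 < Real.Gamma (α + 1) := Real.Gamma_pos_of_pos (by linarith)
  have hG2 : 0 < Real.Gamma (2 * α + 1) := Real.Gamma_pos_of_pos (by linarith)
  set s := Real.log (Real.Gamma (α + 1)) with hs
  have hΓ3 : Real.Gamma 3 = 2 := by
    rw [show (3:ℝ) = 2 + 1 by norm_num, Real.Gamma_add_one two_ne_zero, Real.Gamma_two]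
    norm_num
  have hx : (α + 1 : ℝ) ∈ Set.Ioi (0:ℝ) := by simp; linarith
  have hy : (3 : ℝ) ∈ Set.Ioi (0:ℝ) := by norm_num
  -- Step A : convexity at 2 = (1/(2-α))(α+1) + ((1-α)/(2-α))·3
  have haA : (0:ℝ) ≤ 1 / (2 - α) := by positivity
  have hbA : (0:ℝ) ≤ (1 - α) / (2 - α) := div_nonneg (by linarith) (by linarith)
  have habA : 1 / (2 - α) + (1 - α) / (2 - α) = 1 := by field_simp; try ring
  have hA := Real.convexOn_log_Gamma.2 hx hy haA hbA habA
  have heqA : (1 / (2 - α)) • (α + 1) + ((1 - α) / (2 - α)) • (3:ℝ) = 2 := by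
    simp only [smul_eq_mul]; field_simp; try ring
  rw [heqA] at hA
  simp only [Function.comp_apply, smul_eq_mul, Real.Gamma_two, Real.log_one, hΓ3, ← hs] at hA
  have eA : (2 - α) * ((1 / (2 - α)) * s + ((1 - α) / (2 - α)) * Real.log 2)
      = s + (1 - α) * Real.log 2 := by field_simp; try ring
  have hA' : 0 ≤ s + (1 - α) * Real.log 2 := by
    have := mul_le_mul_of_nonneg_left hA h2.le
    rw [mul_zero, eA] at this
    exact this
  -- Step B : convexity at 2α+1 = (2(1-α)/(2-α))(α+1) + (α/(2-α))·3
  have haB : (0:ℝ) ≤ 2 * (1 - α) / (2 - α) := div_nonneg (by linarith) (by linarith)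
  have hbB : (0:ℝ) ≤ α / (2 - α) := div_nonneg (by linarith) (by linarith)
  have habB : 2 * (1 - α) / (2 - α) + α / (2 - α) = 1 := by field_simp; try ring
  have hB := Real.convexOn_log_Gamma.2 hx hy haB hbB habB
  have heqB : (2 * (1 - α) / (2 - α)) • (α + 1) + (α / (2 - α)) • (3:ℝ) = 2 * α + 1 := by
    simp only [smul_eq_mul]; field_simp; try ring
  rw [heqB] at hB
  simp only [Function.comp_apply, smul_eq_mul, hΓ3, ← hs] at hB
  have eB : (2 - α) * ((2 * (1 - α) / (2 - α)) * s + (α / (2 - α)) * Real.log 2)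
      = 2 * (1 - α) * s + α * Real.log 2 := by field_simp; try ring
  have hB' : (2 - α) * Real.log (Real.Gamma (2 * α + 1))
      ≤ 2 * (1 - α) * s + α * Real.log 2 := by
    have := mul_le_mul_of_nonneg_left hB h2.le
    rw [eB] at this
    exact this
  -- Combine
  have hC : Real.log (Real.Gamma (2 * α + 1)) ≤ Real.log 2 + 2 * s := by
    nlinarith [hB', hA', h2]
  calc Real.Gamma (2 * α + 1) = Real.exp (Real.log (Real.Gamma (2 * α + 1))) :=
        (Real.exp_log hG2).symm
    _ ≤ Real.exp (Real.log 2 + 2 * s) := Real.exp_le_exp.2 hC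
    _ = 2 * Real.Gamma (α + 1) ^ 2 := by
        rw [Real.exp_add, Real.exp_log two_pos, show (2:ℝ) * s = s + s by ring,
          Real.exp_add, hs, Real.exp_log hG1]; ring

/-- A-stability of the 1-stage IFORK method of order `2α`: its growth factor
`E(z) = 1 + (z/Γ(α+1))/(1 − zΓ(α+1)/Γ(2α+1))` satisfies `|E(z)| ≤ 1` for every `z < 0`. -/
theorem ifork1_A_stable
    (α : ℝ) (hα : 0 < α ∧ α ≤ 1) :
    ∀ z : ℝ, z < 0 →
      |1 + (z / Real.Gamma (α + 1)) /
          (1 - z * Real.Gamma (α + 1) / Real.Gamma (2 * α + 1))| ≤ 1 := by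
  obtain ⟨h0, h1⟩ := hα
  intro z hz
  have hG1 : 0 < Real.Gamma (α + 1) := Real.Gamma_pos_of_pos (by linarith)
  have hG2 : 0 < Real.Gamma (2 * α + 1) := Real.Gamma_pos_of_pos (by linarith)
  have hkey := gamma_doubling_le α h0 h1
  set G1 := Real.Gamma (α + 1)
  set G2 := Real.Gamma (2 * α + 1)
  have hw : z * G1 / G2 < 0 :=
    div_neg_of_neg_of_pos (mul_neg_of_neg_of_pos hz hG1) hG2
  have hD : 0 < 1 - z * G1 / G2 := by linarith
  have ht0 : (z / G1) / (1 - z * G1 / G2) ≤ 0 :=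
    div_nonpos_of_nonpos_of_nonneg (div_neg_of_neg_of_pos hz hG1).le hD.le
  have ht2 : -2 ≤ (z / G1) / (1 - z * G1 / G2) := by
    rw [le_div_iff₀ hD, le_div_iff₀ hG1]
    have e : z * G1 / G2 * G2 = z * G1 := div_mul_cancel₀ _ hG2.ne'
    nlinarith [mul_nonneg (neg_nonneg.2 hz.le) (by nlinarith : (0:ℝ) ≤ 2 * G1 ^ 2 - G2),
      mul_pos hG1 hG2, e, hG1, hG2]
  rw [abs_le]
  constructor <;> linarith
end
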